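/- Let f, g : [0,1] → ℝ be continuous functions. Then the upper box-counting dimension of the graph of the sum f+g satisfies dim_B̄ G(f+g) ≤ max{dim_B̄ G(f), dim_B̄ G(g)}. -/

import Mathlib

/-!
Cut `[0, 1]` into `⌈δ⁻¹⌉` columns of width `δ`. Up to a factor `12`, the number of `δ`-balls
needed to cover the graph of a continuous `h` is `∑ᵢ (1 + Rᵢ / δ)`, where `Rᵢ` is the range of
`h` over the `i`-th column (Falconer, *Fractal Geometry*, Prop. 11.1). Ranges are subadditive,
`Rᵢ(f + g) ≤ Rᵢ(f) + Rᵢ(g)`, so `N_δ(G(f + g)) ≤ 24 max (N_δ(G f)) (N_δ(G g))`, and the constant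
disappears after taking logarithms and dividing by `-log δ`.
-/

open Set Filter Metric

noncomputable def coverNum {α : Type*} [PseudoMetricSpace α] (F : Set α) (δ : ℝ) : ℕ :=
  sInf {n : ℕ | ∃ t : Finset α, t.card = n ∧ F ⊆ ⋃ p ∈ t, Metric.closedBall p δ}

noncomputable def upperBoxDim {α : Type*} [PseudoMetricSpace α] (F : Set α) : ℝ :=
  Filter.limsup (fun δ : ℝ => Real.log (coverNum F δ) / -Real.log δ)
    (nhdsWithin (0 : ℝ) (Set.Ioi 0))

noncomputable def lowerBoxDim {α : Type*} [PseudoMetricSpace α] (F : Set α) : ℝ :=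
  Filter.liminf (fun δ : ℝ => Real.log (coverNum F δ) / -Real.log δ)
    (nhdsWithin (0 : ℝ) (Set.Ioi 0))

/-- Graph of `f` over the set `X`. -/
def fnGraphOn (f : ℝ → ℝ) (X : Set ℝ) : Set (ℝ × ℝ) := (fun x => (x, f x)) '' X

/-- Graph of `f` over `[0,1]`. -/
def G (f : ℝ → ℝ) : Set (ℝ × ℝ) := fnGraphOn f (Set.Icc 0 1)

open Topology

noncomputable def boxRatio {α : Type*} [PseudoMetricSpace α] (F : Set α) (δ : ℝ) : ℝ :=
  Real.log (coverNum F δ) / -Real.log δ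

lemma tendsto_neg_log_nhdsGT_zero : Tendsto (fun δ : ℝ => -Real.log δ) (𝓝[>] 0) atTop :=
  tendsto_neg_atBot_atTop.comp Real.tendsto_log_nhdsGT_zero

lemma Real.log_le_log_add_max_of_le_mul_max {a b c : ℕ} {C : ℝ} (hC : 1 ≤ C)
    (h : (a : ℝ) ≤ C * max (b : ℝ) c) :
    Real.log a ≤ Real.log C + max (Real.log b) (Real.log c) := by
  rcases (Nat.cast_nonneg (α := ℝ) a).eq_or_lt with ha | ha
  · rw [← ha, Real.log_zero]
    have := Real.log_nonneg hC
    have := Real.log_natCast_nonneg b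
    positivity
  have hmax : 0 < max (b : ℝ) c := pos_of_mul_pos_right (ha.trans_le h) (by linarith)
  calc Real.log a ≤ Real.log (C * max (b : ℝ) c) := Real.log_le_log ha h
    _ = Real.log C + Real.log (max (b : ℝ) c) := Real.log_mul (by positivity) hmax.ne'
    _ ≤ Real.log C + max (Real.log b) (Real.log c) := by
      rcases max_choice (b : ℝ) c with hbc | hbc <;> simp [hbc]

section CoverNum

variable {α : Type*} [PseudoMetricSpace α] {F : Set α} {δ : ℝ}

lemma coverNum_le_card {t : Finset α} (h : F ⊆ ⋃ p ∈ t, closedBall p δ) :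
    coverNum F δ ≤ t.card :=
  Nat.sInf_le ⟨t, rfl, h⟩

lemma exists_card_eq_coverNum {t : Finset α} (h : F ⊆ ⋃ p ∈ t, closedBall p δ) :
    ∃ s : Finset α, s.card = coverNum F δ ∧ F ⊆ ⋃ p ∈ s, closedBall p δ :=
  Nat.sInf_mem (s := {n | ∃ s : Finset α, s.card = n ∧ F ⊆ ⋃ p ∈ s, closedBall p δ})
    ⟨t.card, t, rfl, h⟩

lemma upperBoxDim_eq_limsup_boxRatio :
    upperBoxDim F = limsup (boxRatio F) (𝓝[>] 0) :=
  rfl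

lemma boxRatio_nonneg (hδ₀ : 0 < δ) (hδ₁ : δ ≤ 1) : 0 ≤ boxRatio F δ :=
  div_nonneg (Real.log_natCast_nonneg _) (neg_nonneg.2 (Real.log_nonpos hδ₀.le hδ₁))

lemma isBoundedUnder_boxRatio_of_coverNum_le {K : ℝ} {d : ℕ}
    (h : ∀ᶠ δ in 𝓝[>] 0, (coverNum F δ : ℝ) ≤ K / δ ^ d) :
    IsBoundedUnder (· ≤ ·) (𝓝[>] 0) (boxRatio F) := by
  refine ⟨|Real.log K| + d, eventually_map.2 ?_⟩
  filter_upwards [h, self_mem_nhdsWithin, tendsto_neg_log_nhdsGT_zero.eventually_ge_atTop 1]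
    with δ hN (hδ : 0 < δ) hL
  rw [boxRatio, div_le_iff₀ (by linarith)]
  rcases (Nat.cast_nonneg (α := ℝ) (coverNum F δ)).eq_or_lt with h0 | hpos
  · rw [← h0, Real.log_zero]
    positivity
  have hK : 0 < K := (div_pos_iff_of_pos_right (by positivity)).1 (hpos.trans_le hN)
  calc Real.log (coverNum F δ) ≤ Real.log (K / δ ^ d) := Real.log_le_log hpos hN
    _ = Real.log K + d * -Real.log δ := by
      rw [Real.log_div hK.ne' (by positivity), Real.log_pow]
      ring
    _ ≤ (|Real.log K| + d) * -Real.log δ := by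
      nlinarith [le_abs_self (Real.log K), abs_nonneg (Real.log K)]

lemma upperBoxDim_le_max_of_coverNum_le {β γ : Type*} [PseudoMetricSpace β]
    [PseudoMetricSpace γ] {A : Set β} {B : Set γ} {C : ℝ} (hC : 1 ≤ C)
    (hA : IsBoundedUnder (· ≤ ·) (𝓝[>] 0) (boxRatio A))
    (hB : IsBoundedUnder (· ≤ ·) (𝓝[>] 0) (boxRatio B))
    (h : ∀ᶠ δ in 𝓝[>] 0, (coverNum F δ : ℝ) ≤ C * max (coverNum A δ : ℝ) (coverNum B δ)) :
    upperBoxDim F ≤ max (upperBoxDim A) (upperBoxDim B) := by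
  have hδ : ∀ᶠ δ in 𝓝[>] (0 : ℝ), δ ∈ Ioo 0 1 := Ioo_mem_nhdsGT one_pos
  have hF : IsCoboundedUnder (· ≤ ·) (𝓝[>] 0) (boxRatio F) :=
    IsBoundedUnder.isCoboundedUnder_le
      ⟨0, eventually_map.2 (hδ.mono fun δ hδ => boxRatio_nonneg hδ.1 hδ.2.le)⟩
  have he : Tendsto (fun δ => Real.log C / -Real.log δ) (𝓝[>] 0) (𝓝 0) :=
    tendsto_const_nhds.div_atTop tendsto_neg_log_nhdsGT_zero
  simp only [upperBoxDim_eq_limsup_boxRatio]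
  refine le_of_forall_pos_le_add fun ε hε => limsup_le_of_le hF ?_
  filter_upwards [hδ, h, eventually_lt_of_limsup_lt (lt_add_of_pos_right _ (half_pos hε)) hA,
    eventually_lt_of_limsup_lt (lt_add_of_pos_right _ (half_pos hε)) hB,
    he.eventually (gt_mem_nhds (half_pos hε))] with δ hδ hN hAδ hBδ heδ
  have hL : 0 < -Real.log δ := neg_pos.2 (Real.log_neg hδ.1 hδ.2)
  have hFδ : boxRatio F δ ≤ Real.log C / -Real.log δ + max (boxRatio A δ) (boxRatio B δ) := by
    rw [boxRatio, boxRatio, boxRatio, max_div_div_right hL.le, ← add_div]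
    exact div_le_div_of_nonneg_right (Real.log_le_log_add_max_of_le_mul_max hC hN) hL.le
  have := max_le_max hAδ.le hBδ.le
  rw [max_add_add_right] at this
  linarith

end CoverNum

lemma exists_le_floor_abs_sub_le {a L δ y : ℝ} (hδ : 0 < δ) (hy : y ∈ Icc a (a + L)) :
    ∃ j ≤ ⌊L / (2 * δ)⌋₊, |y - (a + δ + 2 * δ * j)| ≤ δ := by
  have h2δ : 0 < 2 * δ := by positivity
  have hya : 0 ≤ (y - a) / (2 * δ) := div_nonneg (by linarith [hy.1]) h2δ.le
  refine ⟨⌊(y - a) / (2 * δ)⌋₊,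
    Nat.floor_mono (div_le_div_of_nonneg_right (by linarith [hy.2]) h2δ.le), ?_⟩
  have hlo := Nat.floor_le hya
  have hhi := Nat.lt_floor_add_one ((y - a) / (2 * δ))
  rw [le_div_iff₀ h2δ] at hlo
  rw [div_lt_iff₀ h2δ] at hhi
  rw [abs_le]
  constructor <;> linarith

open MeasureTheory in
lemma sub_le_card_mul_of_Icc_subset_biUnion {ι : Type*} {a b δ : ℝ} {t : Finset ι} {c : ι → ℝ}
    (hδ : 0 ≤ δ) (h : Icc a b ⊆ ⋃ p ∈ t, closedBall (c p) δ) : b - a ≤ t.card * (2 * δ) := by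
  have := (measure_mono (μ := volume) h).trans (measure_biUnion_finset_le t _)
  simp only [Real.volume_Icc, Real.volume_closedBall, Finset.sum_const, nsmul_eq_mul] at this
  rwa [← ENNReal.ofReal_natCast, ← ENNReal.ofReal_mul (Nat.cast_nonneg _),
    ENNReal.ofReal_le_ofReal_iff (by positivity)] at this

lemma Finset.card_le_succ_of_forall_cast_mem_Icc {s : Finset ℕ} {c : ℝ} {n : ℕ}
    (h : ∀ i ∈ s, (i : ℝ) ∈ Set.Icc (c - n) c) : s.card ≤ n + 1 := by
  have hsub : s ⊆ Finset.Icc (⌈c⌉₊ - n) ⌊c⌋₊ := fun i hi => by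
    obtain ⟨hlo, hhi⟩ := h i hi
    have : ⌈c⌉₊ ≤ i + n := Nat.ceil_le.2 (by push_cast; linarith)
    exact Finset.mem_Icc.2 ⟨by omega, Nat.le_floor hhi⟩
  calc s.card ≤ (Finset.Icc (⌈c⌉₊ - n) ⌊c⌋₊).card := Finset.card_le_card hsub
    _ ≤ n + 1 := by
      rw [Nat.card_Icc]
      have := Nat.floor_le_ceil c
      omega

noncomputable def oscOn (h : ℝ → ℝ) (s : Set ℝ) : ℝ := sSup (h '' s) - sInf (h '' s)

section Oscillation

variable {f g h : ℝ → ℝ} {s t : Set ℝ}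

lemma oscOn_nonneg (hs : s.Nonempty) (hh : IsCompact (h '' s)) : 0 ≤ oscOn h s :=
  sub_nonneg.2 (csInf_le_csSup (hs.image h) hh.bddBelow hh.bddAbove)

lemma oscOn_add_le (hs : s.Nonempty) (hf : IsCompact (f '' s)) (hg : IsCompact (g '' s)) :
    oscOn (f + g) s ≤ oscOn f s + oscOn g s := by
  have hsup : sSup ((f + g) '' s) ≤ sSup (f '' s) + sSup (g '' s) :=
    csSup_le (hs.image _) <| forall_mem_image.2 fun x hx =>
      add_le_add (le_csSup hf.bddAbove (mem_image_of_mem f hx))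
        (le_csSup hg.bddAbove (mem_image_of_mem g hx))
  have hinf : sInf (f '' s) + sInf (g '' s) ≤ sInf ((f + g) '' s) :=
    le_csInf (hs.image _) <| forall_mem_image.2 fun x hx =>
      add_le_add (csInf_le hf.bddBelow (mem_image_of_mem f hx))
        (csInf_le hg.bddBelow (mem_image_of_mem g hx))
  unfold oscOn
  linarith

lemma oscOn_mono (hst : s ⊆ t) (hs : s.Nonempty) (ht : IsCompact (h '' t)) :
    oscOn h s ≤ oscOn h t := by
  have hsup := csSup_le_csSup ht.bddAbove (hs.image h) (image_mono hst)
  have hinf := csInf_le_csInf ht.bddBelow (hs.image h) (image_mono hst)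
  unfold oscOn
  linarith

end Oscillation

def column (δ : ℝ) (i : ℕ) : Set ℝ := Icc (i * δ) (min ((i + 1) * δ) 1)

section Column

variable {δ x : ℝ} {i : ℕ}

lemma column_subset_Icc (hδ : 0 ≤ δ) (i : ℕ) : column δ i ⊆ Icc 0 1 :=
  fun _ hx => ⟨(by positivity : (0 : ℝ) ≤ i * δ).trans hx.1, hx.2.trans (min_le_right _ _)⟩

lemma mul_mem_column (hδ : 0 < δ) (hi : i < ⌈δ⁻¹⌉₊) : (i : ℝ) * δ ∈ column δ i := by
  have : (i : ℝ) * δ < 1 := by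
    rw [← lt_div_iff₀ hδ, one_div]
    exact Nat.lt_ceil.1 hi
  exact ⟨le_rfl, le_min (by nlinarith) this.le⟩

lemma exists_mem_column (hδ : 0 < δ) (hx : x ∈ Icc (0 : ℝ) 1) :
    ∃ i < ⌈δ⁻¹⌉₊, x ∈ column δ i := by
  set n := ⌈x / δ⌉₊
  have hxδ : 0 ≤ x / δ := div_nonneg hx.1 hδ.le
  refine ⟨n - 1, ?_, ?_, le_min ?_ hx.2⟩
  · have : n ≤ ⌈δ⁻¹⌉₊ :=
      Nat.ceil_mono ((div_le_div_of_nonneg_right hx.2 hδ.le).trans_eq (one_div δ))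
    have : 0 < ⌈δ⁻¹⌉₊ := Nat.ceil_pos.2 (inv_pos.2 hδ)
    omega
  · rcases Nat.eq_zero_or_pos n with hn | hn
    · simpa [hn] using hx.1
    have : ((n - 1 : ℕ) : ℝ) ≤ x / δ := by
      rw [Nat.cast_sub hn, Nat.cast_one]
      linarith [Nat.ceil_lt_add_one hxδ]
    rwa [le_div_iff₀ hδ] at this
  · have : x / δ ≤ ((n - 1 : ℕ) : ℝ) + 1 := by
      refine (Nat.le_ceil _).trans ?_
      norm_cast
      omega
    rwa [div_le_iff₀ hδ] at this

lemma ContinuousOn.image_column {h : ℝ → ℝ} (hh : ContinuousOn h (Icc 0 1)) (hδ : 0 < δ)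
    (hi : i < ⌈δ⁻¹⌉₊) :
    h '' column δ i = Icc (sInf (h '' column δ i)) (sSup (h '' column δ i)) :=
  (hh.mono (column_subset_Icc hδ.le i)).image_Icc (mul_mem_column hδ hi).2

lemma isCompact_image_column {h : ℝ → ℝ} (hh : ContinuousOn h (Icc 0 1)) (hδ : 0 ≤ δ) (i : ℕ) :
    IsCompact (h '' column δ i) :=
  isCompact_Icc.image_of_continuousOn (hh.mono (column_subset_Icc hδ i))

end Column

noncomputable def graphColumnSum (h : ℝ → ℝ) (δ : ℝ) : ℝ :=
  ∑ i ∈ Finset.range ⌈δ⁻¹⌉₊, (1 + oscOn h (column δ i) / δ)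

section Graph

open Classical Finset in
lemma card_filter_exists_mem_column_dist_le (s : Finset ℕ) {δ : ℝ} (hδ : 0 < δ) (c : ℝ) :
    #{i ∈ s | ∃ x ∈ column δ i, dist x c ≤ δ} ≤ 4 := by
  refine card_le_succ_of_forall_cast_mem_Icc (c := (c + δ) / δ) (n := 3) fun i hi => ?_
  obtain ⟨x, hx, hxc⟩ := (mem_filter.1 hi).2
  rw [Real.dist_eq, abs_le] at hxc
  have hxi : x ≤ (i + 1) * δ := hx.2.trans (min_le_left _ _)
  constructor
  · rw [Nat.cast_ofNat, sub_le_iff_le_add, div_le_iff₀ hδ]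
    linarith
  · rw [le_div_iff₀ hδ]
    linarith [hx.1]

variable {f g h : ℝ → ℝ} {δ : ℝ}

lemma exists_cover_graph_card_le (hh : ContinuousOn h (Icc 0 1)) (hδ : 0 < δ) :
    ∃ t : Finset (ℝ × ℝ), G h ⊆ ⋃ p ∈ t, closedBall p δ ∧ (t.card : ℝ) ≤ graphColumnSum h δ := by
  classical
  set a : ℕ → ℝ := fun i => sInf (h '' column δ i)
  set k : ℕ → ℕ := fun i => ⌊oscOn h (column δ i) / (2 * δ)⌋₊ + 1
  refine ⟨(Finset.range ⌈δ⁻¹⌉₊).biUnion fun i =>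
    (Finset.range (k i)).image fun j : ℕ => ((i : ℝ) * δ, a i + δ + 2 * δ * j), ?_, ?_⟩
  · rintro _ ⟨x, hx, rfl⟩
    obtain ⟨i, hi, hxi⟩ := exists_mem_column hδ hx
    have hy : h x ∈ Icc (a i) (a i + oscOn h (column δ i)) := by
      have := hh.image_column hδ hi ▸ mem_image_of_mem h hxi
      simpa [oscOn, a] using this
    obtain ⟨j, hj, hyj⟩ := exists_le_floor_abs_sub_le hδ hy
    refine mem_iUnion₂.2 ⟨_, Finset.mem_biUnion.2 ⟨i, Finset.mem_range.2 hi,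
      Finset.mem_image_of_mem _ (Finset.mem_range.2 (Nat.lt_succ_of_le hj))⟩, ?_⟩
    rw [mem_closedBall, Prod.dist_eq, Real.dist_eq, Real.dist_eq]
    refine max_le ?_ hyj
    rw [abs_le]
    constructor <;> nlinarith [hxi.1, hxi.2.trans (min_le_left _ _)]
  · refine (Nat.cast_le.2 (Finset.card_biUnion_le.trans (Finset.sum_le_sum fun i _ =>
      Finset.card_image_le.trans (Finset.card_range (k i)).le))).trans ?_
    push_cast
    refine Finset.sum_le_sum fun i hi => ?_
    have hosc := oscOn_nonneg ⟨_, mul_mem_column hδ (Finset.mem_range.1 hi)⟩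
      (isCompact_image_column hh hδ.le i)
    have hfloor := Nat.floor_le (div_nonneg hosc (by positivity : (0 : ℝ) ≤ 2 * δ))
    have : oscOn h (column δ i) / (2 * δ) ≤ oscOn h (column δ i) / δ :=
      div_le_div_of_nonneg_left hosc hδ (by linarith)
    simp only [k]
    push_cast
    linarith

open Classical Finset in
lemma one_add_oscOn_column_div_le (hh : ContinuousOn h (Icc 0 1)) (hδ : 0 < δ) {i : ℕ}
    (hi : i < ⌈δ⁻¹⌉₊) {t : Finset (ℝ × ℝ)} (ht : G h ⊆ ⋃ p ∈ t, closedBall p δ) :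
    1 + oscOn h (column δ i) / δ ≤ 3 * #{p ∈ t | ∃ x ∈ column δ i, dist (x, h x) p ≤ δ} := by
  set T := {p ∈ t | ∃ x ∈ column δ i, dist (x, h x) p ≤ δ}
  have hcover : h '' column δ i ⊆ ⋃ p ∈ T, closedBall p.2 δ := by
    rintro _ ⟨x, hx, rfl⟩
    obtain ⟨p, hp, hxp⟩ := mem_iUnion₂.1 (ht ⟨x, column_subset_Icc hδ.le i hx, rfl⟩)
    exact mem_iUnion₂.2 ⟨p, mem_filter.2 ⟨hp, x, hx, hxp⟩,
      (le_max_right _ _).trans (mem_closedBall.1 hxp)⟩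
  have hT : 1 ≤ #T := by
    obtain ⟨p, hp, -⟩ := mem_iUnion₂.1 (hcover (mem_image_of_mem h (mul_mem_column hδ hi)))
    exact card_pos.2 ⟨p, hp⟩
  have hosc : oscOn h (column δ i) ≤ #T * (2 * δ) :=
    sub_le_card_mul_of_Icc_subset_biUnion hδ.le (hh.image_column hδ hi ▸ hcover)
  have : oscOn h (column δ i) / δ ≤ 2 * #T := by
    rw [div_le_iff₀ hδ]
    linarith
  have : (1 : ℝ) ≤ #T := by exact_mod_cast hT
  linarith

open Classical Finset in
lemma graphColumnSum_le_coverNum (hh : ContinuousOn h (Icc 0 1)) (hδ : 0 < δ) :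
    graphColumnSum h δ ≤ 12 * coverNum (G h) δ := by
  obtain ⟨t₀, ht₀, -⟩ := exists_cover_graph_card_le hh hδ
  obtain ⟨t, htcard, ht⟩ := exists_card_eq_coverNum ht₀
  set r : ℕ → ℝ × ℝ → Prop := fun i p => ∃ x ∈ column δ i, dist (x, h x) p ≤ δ
  have hball (p : ℝ × ℝ) : #((range ⌈δ⁻¹⌉₊).bipartiteBelow r p) ≤ 4 :=
    (Finset.card_le_card fun i hi => by
      obtain ⟨hi, x, hx, hxp⟩ := mem_filter.1 hi
      exact mem_filter.2 ⟨hi, x, hx, (le_max_left _ _).trans hxp⟩).trans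
      (card_filter_exists_mem_column_dist_le _ hδ p.1)
  calc graphColumnSum h δ ≤ ∑ i ∈ range ⌈δ⁻¹⌉₊, 3 * (#(t.bipartiteAbove r i) : ℝ) :=
        sum_le_sum fun i hi => one_add_oscOn_column_div_le hh hδ (mem_range.1 hi) ht
    _ = 3 * ∑ p ∈ t, (#((range ⌈δ⁻¹⌉₊).bipartiteBelow r p) : ℝ) := by
        rw [← mul_sum]
        exact_mod_cast congrArg (3 * ·) (sum_card_bipartiteAbove_eq_sum_card_bipartiteBelow r)
    _ ≤ 3 * ∑ _p ∈ t, (4 : ℝ) := by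
        gcongr with p
        exact_mod_cast hball p
    _ = 12 * coverNum (G h) δ := by
        rw [sum_const, nsmul_eq_mul, htcard]
        ring

lemma coverNum_graph_le_graphColumnSum (hh : ContinuousOn h (Icc 0 1)) (hδ : 0 < δ) :
    (coverNum (G h) δ : ℝ) ≤ graphColumnSum h δ := by
  obtain ⟨t, ht, hcard⟩ := exists_cover_graph_card_le hh hδ
  exact (Nat.cast_le.2 (coverNum_le_card ht)).trans hcard

lemma graphColumnSum_add_le (hf : ContinuousOn f (Icc 0 1)) (hg : ContinuousOn g (Icc 0 1))
    (hδ : 0 < δ) : graphColumnSum (f + g) δ ≤ graphColumnSum f δ + graphColumnSum g δ := by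
  rw [graphColumnSum, graphColumnSum, graphColumnSum, ← Finset.sum_add_distrib]
  refine Finset.sum_le_sum fun i hi => ?_
  have := oscOn_add_le ⟨_, mul_mem_column hδ (Finset.mem_range.1 hi)⟩
    (isCompact_image_column hf hδ.le i) (isCompact_image_column hg hδ.le i)
  have := div_le_div_of_nonneg_right this hδ.le
  rw [add_div] at this
  linarith

lemma coverNum_graph_add_le (hf : ContinuousOn f (Icc 0 1)) (hg : ContinuousOn g (Icc 0 1))
    (hδ : 0 < δ) :
    (coverNum (G (f + g)) δ : ℝ) ≤ 24 * max (coverNum (G f) δ : ℝ) (coverNum (G g) δ) := by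
  have := graphColumnSum_le_coverNum hf hδ
  have := graphColumnSum_le_coverNum hg hδ
  have := le_max_left (coverNum (G f) δ : ℝ) (coverNum (G g) δ)
  have := le_max_right (coverNum (G f) δ : ℝ) (coverNum (G g) δ)
  calc (coverNum (G (f + g)) δ : ℝ) ≤ graphColumnSum (f + g) δ :=
        coverNum_graph_le_graphColumnSum (hf.add hg) hδ
    _ ≤ graphColumnSum f δ + graphColumnSum g δ := graphColumnSum_add_le hf hg hδ
    _ ≤ 24 * max (coverNum (G f) δ : ℝ) (coverNum (G g) δ) := by linarith

lemma coverNum_graph_le_div_sq (hh : ContinuousOn h (Icc 0 1)) (hδ₀ : 0 < δ) (hδ₁ : δ ≤ 1) :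
    (coverNum (G h) δ : ℝ) ≤ 2 * (1 + oscOn h (Icc 0 1)) / δ ^ 2 := by
  have hI : IsCompact (h '' Icc 0 1) := isCompact_Icc.image_of_continuousOn hh
  have hcol : ∀ i ∈ Finset.range ⌈δ⁻¹⌉₊,
      1 + oscOn h (column δ i) / δ ≤ 1 + oscOn h (Icc 0 1) / δ := fun i hi => by
    gcongr
    exact oscOn_mono (column_subset_Icc hδ₀.le i)
      ⟨_, mul_mem_column hδ₀ (Finset.mem_range.1 hi)⟩ hI
  have hm : (⌈δ⁻¹⌉₊ : ℝ) ≤ 2 / δ := by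
    have := Nat.ceil_lt_add_one (inv_nonneg.2 hδ₀.le)
    have := one_le_inv_iff₀.2 ⟨hδ₀, hδ₁⟩
    rw [div_eq_mul_inv]
    linarith
  have hR : 0 ≤ oscOn h (Icc 0 1) := oscOn_nonneg (nonempty_Icc.2 zero_le_one) hI
  calc (coverNum (G h) δ : ℝ) ≤ graphColumnSum h δ := coverNum_graph_le_graphColumnSum hh hδ₀
    _ ≤ ⌈δ⁻¹⌉₊ * (1 + oscOn h (Icc 0 1) / δ) := by
      simpa only [graphColumnSum, Finset.sum_const, Finset.card_range, nsmul_eq_mul]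
        using Finset.sum_le_sum hcol
    _ ≤ 2 / δ * (1 + oscOn h (Icc 0 1) / δ) := by gcongr
    _ = 2 * (δ + oscOn h (Icc 0 1)) / δ ^ 2 := by field_simp
    _ ≤ 2 * (1 + oscOn h (Icc 0 1)) / δ ^ 2 := by gcongr

lemma isBoundedUnder_boxRatio_graph (hh : ContinuousOn h (Icc 0 1)) :
    IsBoundedUnder (· ≤ ·) (𝓝[>] 0) (boxRatio (G h)) :=
  isBoundedUnder_boxRatio_of_coverNum_le (d := 2) <|
    mem_of_superset (Ioc_mem_nhdsGT one_pos) fun _ hδ => coverNum_graph_le_div_sq hh hδ.1 hδ.2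

end Graph

theorem upperBoxDim_graph_add_le (f g : ℝ → ℝ)
    (hf : ContinuousOn f (Set.Icc 0 1)) (hg : ContinuousOn g (Set.Icc 0 1)) :
    upperBoxDim (G (f + g)) ≤ max (upperBoxDim (G f)) (upperBoxDim (G g)) :=
  upperBoxDim_le_max_of_coverNum_le (by norm_num) (isBoundedUnder_boxRatio_graph hf)
    (isBoundedUnder_boxRatio_graph hg) <|
    eventually_nhdsWithin_of_forall fun _ hδ => coverNum_graph_add_le hf hg hδ
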